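/- Let R be a commutative Noetherian ring and let f₁,…,fᵣ ∈ R generate a proper ideal I. Then the Koszul complex K_•(f₁,…,fᵣ) has vanishing homology in all positive homological degrees if and only if depth I = r. -/

import Mathlib

/-!
Multiplication by `f_j` is null-homotopic on `K_•(f)`, via `d(e_j ∧ z) + e_j ∧ dz = f_j z`, so
the ideal `(f)` annihilates the homology of `K_•(f) ⊗ A/J` for every ideal `J`. For `g ∈ (f)`
a nonzerodivisor on `A/J`, this turns the long exact sequence of
`0 → A/J →g A/J → A/(J + g) → 0` into two statements:
* a regular sequence of length `n` in `(f)` kills `H_p` for `p > r - n`; in particular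
  `depth (f) ≤ r`, since `H_0 = A/(f) ≠ 0`, and `depth (f) = r` gives exactness;
* conversely, if `K_•(f)` is exact in positive degrees, exactness of `K_•(f) ⊗ A/(g₁,…,gⱼ)` in
  degrees `> j` passes to `j + 1`. As `H_r(K_•(f) ⊗ A/(g₁,…,gⱼ)) = 0` says `(f)` has zero
  annihilator on `A/(g₁,…,gⱼ)`, prime avoidance over its associated primes provides the next
  element `g_{j+1} ∈ (f)`, so `(f)` contains a regular sequence of length `r`.
-/

noncomputable section

/-- The `p`-th term `⋀^p Rʳ` of the Koszul complex, realised as the free module on the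
`p`-element subsets of `Fin r`. -/
abbrev KoszulTerm (A : Type) [CommRing A] (r p : ℕ) : Type :=
  {S : Finset (Fin r) // S.card = p} → A

/-- The Koszul differential `⋀^{p+1} Rʳ → ⋀^p Rʳ` associated to `f₁,…,fᵣ`. -/
noncomputable def koszulD {A : Type} [CommRing A] {r : ℕ} (f : Fin r → A) (p : ℕ) :
    KoszulTerm A r (p + 1) →ₗ[A] KoszulTerm A r p :=
  LinearMap.pi fun T => ∑ i : Fin r,
    if h : i ∈ T.1 then 0
    else ((-1 : A) ^ (T.1.filter (· < i)).card * f i) •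
      LinearMap.proj (R := A)
        (⟨insert i T.1, by rw [Finset.card_insert_of_notMem h, T.2]⟩ :
          {S : Finset (Fin r) // S.card = p + 1})

/-- `f₁,…,fₖ` is a regular sequence: `(f₁,…,fₖ) ≠ R` and each `fᵢ` is a nonzerodivisor
on `R/(f₁,…,f_{i−1})`. -/
def IsRegularSeq {A : Type} [CommRing A] {k : ℕ} (f : Fin k → A) : Prop :=
  Ideal.span (Set.range f) ≠ ⊤ ∧
  ∀ (i : Fin k) (x : A), f i * x ∈ Ideal.span (f '' {j | j < i}) →
    x ∈ Ideal.span (f '' {j | j < i})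

/-- `depth I ≥ n`: the ideal `I` contains a regular sequence of length `n`. -/
def depthGE {A : Type} [CommRing A] (I : Ideal A) (n : ℕ) : Prop :=
  ∃ f : Fin n → A, (∀ i, f i ∈ I) ∧ IsRegularSeq f

/-- `depth I = n`: the grade of `I` on `R` is `n`, i.e. `I` contains a regular sequence
of length `n` and every regular sequence contained in `I` has length at most `n`
(equivalently, over a Noetherian ring, every maximal regular sequence in `I` has
length exactly `n`). -/
def depthEq {A : Type} [CommRing A] (I : Ideal A) (n : ℕ) : Prop :=
  depthGE I n ∧ ∀ k : ℕ, depthGE I k → k ≤ n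

section RegularSequence

variable {A : Type} [CommRing A]

/-- `g₁,…,gₙ` is a weakly regular sequence on `A/J`. -/
def IsWeaklyRegularMod (J : Ideal A) {n : ℕ} (g : Fin n → A) : Prop :=
  ∀ (i : Fin n) (x : A), g i * x ∈ J ⊔ Ideal.span (g '' {j | j < i}) →
    x ∈ J ⊔ Ideal.span (g '' {j | j < i})

lemma isWeaklyRegularMod_bot_iff {n : ℕ} {g : Fin n → A} :
    IsWeaklyRegularMod ⊥ g ↔ ∀ (i : Fin n) (x : A), g i * x ∈ Ideal.span (g '' {j | j < i}) →
      x ∈ Ideal.span (g '' {j | j < i}) := by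
  simp only [IsWeaklyRegularMod, bot_sup_eq]

lemma Fin.image_snoc_setOf_lt {α : Type*} {n : ℕ} (g : Fin n → α) (h : α) (i : Fin (n + 1)) :
    Fin.snoc g h '' {l | l < i} = g '' {l | Fin.castSucc l < i} := by
  ext y
  constructor
  · rintro ⟨l, hl, rfl⟩
    obtain ⟨l, rfl⟩ := Fin.exists_castSucc_eq.2 (Fin.ne_last_of_lt hl)
    exact ⟨l, hl, by simp⟩
  · rintro ⟨l, hl, rfl⟩
    exact ⟨Fin.castSucc l, hl, by simp⟩

namespace IsWeaklyRegularMod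

variable {J : Ideal A} {n : ℕ}

lemma mem_of_head_mul_mem {g : Fin (n + 1) → A} (hg : IsWeaklyRegularMod J g) {x : A}
    (hx : g 0 * x ∈ J) : x ∈ J := by
  simpa [Fin.not_lt_zero] using hg 0 x (by simpa [Fin.not_lt_zero] using hx)

lemma tail {g : Fin (n + 1) → A} (hg : IsWeaklyRegularMod J g) :
    IsWeaklyRegularMod (J ⊔ Ideal.span {g 0}) (Fin.tail g) := by
  intro i x
  have hset : g '' {j | j < i.succ} = insert (g 0) (Fin.tail g '' {j | j < i}) := by
    ext y
    constructor
    · rintro ⟨j, hj, rfl⟩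
      induction j using Fin.cases with
      | zero => exact Or.inl rfl
      | succ k => exact Or.inr ⟨k, Fin.succ_lt_succ_iff.1 hj, rfl⟩
    · rintro (rfl | ⟨k, hk, rfl⟩)
      · exact ⟨0, Fin.succ_pos i, rfl⟩
      · exact ⟨k.succ, Fin.succ_lt_succ_iff.2 hk, rfl⟩
  have hideal : J ⊔ Ideal.span (g '' {j | j < i.succ}) =
      J ⊔ Ideal.span {g 0} ⊔ Ideal.span (Fin.tail g '' {j | j < i}) := by
    rw [hset, Ideal.span_insert, sup_assoc]
  rw [← hideal]
  exact hg i.succ x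

lemma snoc {g : Fin n → A} (hg : IsWeaklyRegularMod J g) {h : A}
    (hh : ∀ x, h * x ∈ J ⊔ Ideal.span (Set.range g) → x ∈ J ⊔ Ideal.span (Set.range g)) :
    IsWeaklyRegularMod J (Fin.snoc g h) := by
  intro i x
  rw [Fin.image_snoc_setOf_lt]
  induction i using Fin.lastCases with
  | last => simpa [Fin.castSucc_lt_last, Set.image_univ] using hh x
  | cast k => simpa [Fin.castSucc_lt_castSucc_iff] using hg k x

end IsWeaklyRegularMod

lemma exists_eq_add_smul_of_mem_sup_span_singleton {ι : Type*} {J : Ideal A} {g : A}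
    (x : ι → A) (hx : ∀ i, x i ∈ J ⊔ Ideal.span {g}) :
    ∃ a b : ι → A, (∀ i, a i ∈ J) ∧ x = a + g • b := by
  choose a ha c hc hac using fun i => Submodule.mem_sup.1 (hx i)
  choose b hb using fun i => Ideal.mem_span_singleton'.1 (hc i)
  refine ⟨a, b, ha, funext fun i => ?_⟩
  simp [← hac i, ← hb i, mul_comm]

theorem exists_mem_span_regular_of_forall_mul_mem [IsNoetherianRing A] {ι : Type*} (f : ι → A)
    (J : Ideal A) (hf : ∀ x, (∀ t, f t * x ∈ J) → x ∈ J) :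
    ∃ h ∈ Ideal.span (Set.range f), ∀ x, h * x ∈ J → x ∈ J := by
  by_contra! hzd
  let I : Ideal (A ⧸ J) := (Ideal.span (Set.range f)).map (Ideal.Quotient.mk J)
  have hdisj : Disjoint (I : Set (A ⧸ J)) (nonZeroDivisors (A ⧸ J)) := by
    refine Set.disjoint_left.2 fun y hy hreg => ?_
    obtain ⟨h, hh, rfl⟩ := (Ideal.mem_map_iff_of_surjective _ Ideal.Quotient.mk_surjective).1 hy
    obtain ⟨x, hhx, hx⟩ := hzd h hh
    refine hx (Ideal.Quotient.eq_zero_iff_mem.1 ((mem_nonZeroDivisors_iff.1 hreg).1 _ ?_))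
    rw [← map_mul, Ideal.Quotient.eq_zero_iff_mem]
    exact hhx
  obtain ⟨y, hy, hy0⟩ :=
    SetLike.exists_of_lt (Ideal.bot_lt_annihilator_of_disjoint_nonZeroDivisors hdisj)
  obtain ⟨x, rfl⟩ := Ideal.Quotient.mk_surjective y
  refine hy0 (Ideal.Quotient.eq_zero_iff_mem.2 (hf x fun t => ?_))
  have hft : Ideal.Quotient.mk J (f t) ∈ I := Ideal.mem_map_of_mem _ (Ideal.subset_span ⟨t, rfl⟩)
  have hann := Module.mem_annihilator.1 hy ⟨_, hft⟩
  rw [← Ideal.Quotient.eq_zero_iff_mem, map_mul, mul_comm]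
  exact congrArg Subtype.val hann

end RegularSequence

namespace KoszulComplex

variable {A : Type} [CommRing A] {r : ℕ}

/-- The sign with which `e_i` moves into place in `e_i ∧ e_S`. -/
def sign (A : Type) [CommRing A] (i : Fin r) (S : Finset (Fin r)) : A :=
  (-1 : A) ^ (S.filter (· < i)).card

lemma sign_mul_self (i : Fin r) (S : Finset (Fin r)) : sign A i S * sign A i S = 1 := by
  rw [sign, ← pow_add]
  exact Even.neg_one_pow ⟨_, rfl⟩

lemma sign_insert (i : Fin r) {j : Fin r} {S : Finset (Fin r)} (hj : j ∉ S) :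
    sign A i (insert j S) = (if j < i then -1 else 1) * sign A i S := by
  rw [sign, sign, Finset.filter_insert]
  split_ifs
  · rw [Finset.card_insert_of_notMem (fun h => hj (Finset.mem_filter.1 h).1), pow_succ]
    ring
  · rw [one_mul]

lemma sign_insert_self (j : Fin r) (S : Finset (Fin r)) : sign A j (insert j S) = sign A j S := by
  rw [sign, sign, Finset.filter_insert, if_neg (lt_irrefl j)]

lemma sign_erase (i : Fin r) {j : Fin r} {S : Finset (Fin r)} (hj : j ∈ S) :
    sign A i (S.erase j) = (if j < i then -1 else 1) * sign A i S := by
  conv_rhs => rw [← Finset.insert_erase hj, sign_insert i (Finset.notMem_erase j S)]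
  split_ifs <;> ring

lemma sign_erase_self (j : Fin r) (S : Finset (Fin r)) : sign A j (S.erase j) = sign A j S := by
  by_cases hj : j ∈ S
  · rw [sign_erase j hj, if_neg (lt_irrefl j), one_mul]
  · rw [Finset.erase_eq_of_notMem hj]

lemma ite_lt_add_ite_lt {i k : Fin r} (h : i ≠ k) :
    (if i < k then (-1 : A) else 1) + (if k < i then -1 else 1) = 0 := by
  rcases h.lt_or_gt with h | h
  · rw [if_pos h, if_neg h.asymm]; ring
  · rw [if_neg h.asymm, if_pos h]; ring

lemma KoszulTerm.congr {p : ℕ} (z : KoszulTerm A r p) {S S' : Finset (Fin r)} (h : S = S')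
    {hS : S.card = p} (hS' : S'.card = p) : z ⟨S, hS⟩ = z ⟨S', hS'⟩ := by
  subst h; rfl

lemma koszulD_apply (f : Fin r → A) (p : ℕ) (z : KoszulTerm A r (p + 1))
    (T : {S : Finset (Fin r) // S.card = p}) :
    koszulD f p z T = ∑ i : Fin r,
      if h : i ∈ T.1 then 0
      else sign A i T.1 * f i * z ⟨insert i T.1, by rw [Finset.card_insert_of_notMem h, T.2]⟩ := by
  simp only [koszulD, LinearMap.pi_apply, LinearMap.coe_sum, Finset.sum_apply]
  refine Finset.sum_congr rfl fun i _ => ?_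
  split_ifs <;> rfl

/-- Exterior multiplication `z ↦ e_j ∧ z`. -/
def wedge (j : Fin r) {p : ℕ} (z : KoszulTerm A r p) : KoszulTerm A r (p + 1) :=
  fun T => if h : j ∈ T.1 then
    sign A j T.1 * z ⟨T.1.erase j, by simp [Finset.card_erase_of_mem h, T.2]⟩ else 0

@[simp]
lemma wedge_zero (j : Fin r) (p : ℕ) : wedge j (0 : KoszulTerm A r p) = 0 := by
  funext T
  simp [wedge]

lemma koszulD_wedge_apply_of_notMem (f : Fin r → A) (j : Fin r) {p : ℕ}
    (z : KoszulTerm A r p) {T : {S : Finset (Fin r) // S.card = p}} (hj : j ∉ T.1) :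
    koszulD f p (wedge j z) T = f j * z T := by
  obtain ⟨T, hT⟩ := T
  rw [koszulD_apply, Finset.sum_eq_single j]
  · rw [dif_neg hj, wedge, dif_pos (Finset.mem_insert_self j T), sign_insert_self,
      KoszulTerm.congr z (Finset.erase_insert hj) hT]
    linear_combination f j * z ⟨T, hT⟩ * sign_mul_self (A := A) j T
  · intro i _ hij
    split_ifs with hi
    · rfl
    · rw [wedge, dif_neg (by simp [hij.symm, hj]), mul_zero]
  · simp

lemma koszulD_wedge_apply_of_mem (f : Fin r → A) (j : Fin r) {q : ℕ}
    (z : KoszulTerm A r (q + 1)) {T : {S : Finset (Fin r) // S.card = q + 1}} (hj : j ∈ T.1) :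
    koszulD f (q + 1) (wedge j z) T = f j * z T -
      sign A j T.1 * koszulD f q z ⟨T.1.erase j, by simp [Finset.card_erase_of_mem hj, T.2]⟩ := by
  obtain ⟨T, hT⟩ := T
  dsimp only at hj ⊢
  rw [koszulD_apply, koszulD_apply, Finset.mul_sum, eq_sub_iff_add_eq, ← Finset.sum_add_distrib,
    Finset.sum_eq_single j]
  · rw [dif_pos hj, dif_neg (Finset.notMem_erase j T), zero_add, sign_erase_self,
      KoszulTerm.congr z (Finset.insert_erase hj) hT]
    linear_combination f j * z ⟨T, hT⟩ * sign_mul_self (A := A) j T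
  · intro i _ hij
    by_cases hi : i ∈ T
    · rw [dif_pos hi, dif_pos (Finset.mem_erase.2 ⟨hij, hi⟩), mul_zero, add_zero]
    · have hiT : i ∉ T.erase j := fun h => hi (Finset.mem_of_mem_erase h)
      have hcard : (insert i (T.erase j)).card = q + 1 := by
        rw [Finset.card_insert_of_notMem hiT, Finset.card_erase_of_mem hj, hT]; omega
      rw [dif_neg hi, dif_neg hiT, wedge, dif_pos (Finset.mem_insert_of_mem hj),
        KoszulTerm.congr z (Finset.erase_insert_of_ne hij) hcard, sign_insert j hi,
        sign_erase i hj]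
      linear_combination sign A i T * sign A j T * f i * z ⟨_, hcard⟩ *
        ite_lt_add_ite_lt (A := A) hij
  · simp

lemma koszulD_zero_wedge (f : Fin r → A) (j : Fin r) (z : KoszulTerm A r 0) :
    koszulD f 0 (wedge j z) = f j • z := by
  funext T
  have hT : T.1 = ∅ := Finset.card_eq_zero.1 T.2
  exact koszulD_wedge_apply_of_notMem f j z (by simp [hT])

lemma koszulD_succ_wedge (f : Fin r → A) (j : Fin r) {q : ℕ} (z : KoszulTerm A r (q + 1)) :
    koszulD f (q + 1) (wedge j z) = f j • z - wedge j (koszulD f q z) := by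
  funext T
  by_cases hj : j ∈ T.1
  · rw [koszulD_wedge_apply_of_mem f j z hj]
    simp [wedge, hj]
  · rw [koszulD_wedge_apply_of_notMem f j z hj]
    simp [wedge, hj]

lemma single_eq_wedge {p : ℕ} {T : {S : Finset (Fin r) // S.card = p + 1}} {j : Fin r}
    (hj : j ∈ T.1) (x : A) :
    Pi.single T x = wedge j (Pi.single (⟨T.1.erase j, by simp [Finset.card_erase_of_mem hj, T.2]⟩ :
      {S : Finset (Fin r) // S.card = p}) (sign A j T.1 * x)) := by
  funext U
  by_cases hU : j ∈ U.1
  · rw [wedge, dif_pos hU]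
    by_cases hUT : U = T
    · subst hUT
      rw [Pi.single_eq_same, Pi.single_eq_same, ← mul_assoc, sign_mul_self, one_mul]
    · have hne : U.1.erase j ≠ T.1.erase j := fun h => hUT <| Subtype.ext <| by
        rw [← Finset.insert_erase hU, h, Finset.insert_erase hj]
      rw [Pi.single_eq_of_ne hUT, Pi.single_eq_of_ne (fun h => hne (congrArg Subtype.val h)),
        mul_zero]
  · rw [wedge, dif_neg hU, Pi.single_eq_of_ne (by rintro rfl; exact hU hj)]

lemma linearMap_ext_wedge {M : Type*} [AddCommGroup M] [Module A M] {p : ℕ}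
    {φ ψ : KoszulTerm A r (p + 1) →ₗ[A] M}
    (h : ∀ (j : Fin r) (y : KoszulTerm A r p), φ (wedge j y) = ψ (wedge j y)) : φ = ψ := by
  refine LinearMap.pi_ext fun T x => ?_
  obtain ⟨j, hj⟩ := Finset.card_pos.1 (by rw [T.2]; exact Nat.succ_pos p)
  rw [single_eq_wedge hj]
  exact h j _

theorem koszulD_comp_koszulD (f : Fin r → A) (p : ℕ) :
    koszulD f p ∘ₗ koszulD f (p + 1) = 0 := by
  induction p with
  | zero =>
    refine linearMap_ext_wedge fun j y => ?_
    simp [koszulD_succ_wedge, koszulD_zero_wedge]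
  | succ q ih =>
    refine linearMap_ext_wedge fun j y => ?_
    simp [koszulD_succ_wedge, ← LinearMap.comp_apply, ih]

lemma koszulD_koszulD (f : Fin r → A) (p : ℕ) (w : KoszulTerm A r (p + 2)) :
    koszulD f p (koszulD f (p + 1) w) = 0 :=
  LinearMap.congr_fun (koszulD_comp_koszulD f p) w

/-- `z` is a cycle of `K_•(f) ⊗ A/J`; in degree `0` every element is. -/
def IsCycleMod (f : Fin r → A) (J : Ideal A) : {p : ℕ} → KoszulTerm A r p → Prop
  | 0, _ => True
  | p + 1, z => ∀ T, koszulD f p z T ∈ J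

/-- `H_p(K_•(f) ⊗ A/J) = 0`, stated on representatives in `K_p`. -/
def ExactModAt (f : Fin r → A) (J : Ideal A) (p : ℕ) : Prop :=
  ∀ z : KoszulTerm A r p, IsCycleMod f J z →
    ∃ w : KoszulTerm A r (p + 1), ∀ T, z T - koszulD f p w T ∈ J

lemma exactModAt_of_lt (f : Fin r → A) (J : Ideal A) {p : ℕ} (h : r < p) : ExactModAt f J p := by
  refine fun _ _ => ⟨0, fun T => absurd (T.2 ▸ Finset.card_le_univ T.1) ?_⟩
  simpa using h

lemma koszulD_apply_mem (f : Fin r → A) {J : Ideal A} {p : ℕ} {z : KoszulTerm A r (p + 1)}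
    (hz : ∀ T, z T ∈ J) (T : {S : Finset (Fin r) // S.card = p}) : koszulD f p z T ∈ J := by
  rw [koszulD_apply]
  refine Submodule.sum_mem _ fun i _ => ?_
  split_ifs
  · exact J.zero_mem
  · exact J.mul_mem_left _ (hz _)

lemma koszulD_apply_mem_span (f : Fin r → A) {p : ℕ} (z : KoszulTerm A r (p + 1))
    (T : {S : Finset (Fin r) // S.card = p}) : koszulD f p z T ∈ Ideal.span (Set.range f) := by
  rw [koszulD_apply]
  refine Submodule.sum_mem _ fun i _ => ?_
  split_ifs
  · exact Submodule.zero_mem _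
  · rw [mul_right_comm]
    exact Ideal.mul_mem_left _ _ (Ideal.subset_span ⟨i, rfl⟩)

lemma wedge_apply_mem (j : Fin r) {J : Ideal A} {p : ℕ} {z : KoszulTerm A r p}
    (hz : ∀ T, z T ∈ J) (T : {S : Finset (Fin r) // S.card = p + 1}) : wedge j z T ∈ J := by
  rw [wedge]
  split_ifs
  · exact J.mul_mem_left _ (hz _)
  · exact J.zero_mem

lemma mul_sub_koszulD_wedge_mem (f : Fin r → A) {J : Ideal A} (j : Fin r) {p : ℕ}
    {z : KoszulTerm A r p} (hz : IsCycleMod f J z) (T : {S : Finset (Fin r) // S.card = p}) :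
    f j * z T - koszulD f p (wedge j z) T ∈ J := by
  cases p with
  | zero => simp [koszulD_zero_wedge]
  | succ q => simpa [koszulD_succ_wedge] using wedge_apply_mem j hz T

lemma exists_mul_sub_koszulD_mem (f : Fin r → A) {J : Ideal A} {g : A}
    (hg : g ∈ Ideal.span (Set.range f)) {p : ℕ} {z : KoszulTerm A r p} (hz : IsCycleMod f J z) :
    ∃ u : KoszulTerm A r (p + 1), ∀ T, g * z T - koszulD f p u T ∈ J := by
  obtain ⟨c, rfl⟩ := Ideal.mem_span_range_iff_exists_fun.1 hg
  refine ⟨∑ j, c j • wedge j z, fun T => ?_⟩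
  have hsum : (∑ j, c j * f j) * z T - koszulD f p (∑ j, c j • wedge j z) T =
      ∑ j, c j * (f j * z T - koszulD f p (wedge j z) T) := by
    simp only [map_sum, map_smul, Finset.sum_apply, Pi.smul_apply, smul_eq_mul, Finset.sum_mul,
      ← Finset.sum_sub_distrib]
    exact Finset.sum_congr rfl fun j _ => by ring
  rw [hsum]
  exact Submodule.sum_mem _ fun j _ => J.mul_mem_left _ (mul_sub_koszulD_wedge_mem f j hz T)

theorem exactModAt_of_isWeaklyRegularMod (f : Fin r → A) {n : ℕ} {J : Ideal A} {g : Fin n → A}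
    (hgf : ∀ i, g i ∈ Ideal.span (Set.range f)) (hg : IsWeaklyRegularMod J g) (p : ℕ)
    (hp : r < p + n) : ExactModAt f J p := by
  induction n generalizing J p with
  | zero => exact exactModAt_of_lt f J hp
  | succ n ih =>
    intro z hz
    obtain ⟨u, hu⟩ := exists_mul_sub_koszulD_mem f (hgf 0) hz
    have hu_cycle : IsCycleMod f (J ⊔ Ideal.span {g 0}) u := fun T => by
      rw [← sub_sub_cancel (g 0 * z T) (koszulD f p u T)]
      exact sub_mem
        (Ideal.mem_sup_right (Ideal.mul_mem_right _ _ (Ideal.mem_span_singleton_self _)))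
        (Ideal.mem_sup_left (hu T))
    obtain ⟨v, hv⟩ := ih (fun i => hgf i.succ) hg.tail (p + 1) (by omega) u hu_cycle
    obtain ⟨a, b, ha, hab⟩ := exists_eq_add_smul_of_mem_sup_span_singleton _ hv
    have hdu : koszulD f p u = koszulD f p a + g 0 • koszulD f p b := by
      rw [eq_add_of_sub_eq' hab, map_add, map_add, koszulD_koszulD, zero_add, map_smul]
    refine ⟨b, fun T => hg.mem_of_head_mul_mem ?_⟩
    have hT : g 0 * (z T - koszulD f p b T) =
        (g 0 * z T - koszulD f p u T) + koszulD f p a T := by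
      rw [hdu]; simp only [Pi.add_apply, Pi.smul_apply, smul_eq_mul]; ring
    rw [hT]
    exact add_mem (hu T) (koszulD_apply_mem f ha T)

theorem exactModAt_sup_span_singleton (f : Fin r → A) {J : Ideal A} {g : A}
    (hg : ∀ x, g * x ∈ J → x ∈ J) {p : ℕ} (hp : ExactModAt f J p)
    (hp1 : ExactModAt f J (p + 1)) : ExactModAt f (J ⊔ Ideal.span {g}) (p + 1) := by
  intro z hz
  obtain ⟨a, b, ha, hdz⟩ := exists_eq_add_smul_of_mem_sup_span_singleton _ hz
  have hb : IsCycleMod f J b := by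
    cases p with
    | zero => trivial
    | succ q =>
      intro U
      have hdd := congrFun (koszulD_koszulD f q z) U
      rw [hdz, map_add, map_smul] at hdd
      simp only [Pi.add_apply, Pi.smul_apply, smul_eq_mul, Pi.zero_apply] at hdd
      refine hg _ ?_
      rw [eq_neg_of_add_eq_zero_right hdd]
      exact neg_mem (koszulD_apply_mem f ha U)
  obtain ⟨v, hv⟩ := hp b hb
  have hzv : IsCycleMod f J (z - g • v) := fun T => by
    have hT : koszulD f p (z - g • v) T = a T + g * (b T - koszulD f p v T) := by
      rw [map_sub, map_smul, hdz]
      simp only [Pi.sub_apply, Pi.add_apply, Pi.smul_apply, smul_eq_mul]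
      ring
    rw [hT]
    exact add_mem (ha T) (J.mul_mem_left _ (hv T))
  obtain ⟨w, hw⟩ := hp1 _ hzv
  refine ⟨w, fun T => ?_⟩
  have hT : z T - koszulD f (p + 1) w T = ((z - g • v) T - koszulD f (p + 1) w T) + g * v T := by
    simp only [Pi.sub_apply, Pi.smul_apply, smul_eq_mul]
    ring
  rw [hT]
  exact add_mem (Ideal.mem_sup_left (hw T))
    (Ideal.mem_sup_right (Ideal.mul_mem_right _ _ (Ideal.mem_span_singleton_self _)))

lemma mem_of_forall_mul_mem_of_exactModAt (f : Fin r → A) {J : Ideal A} (hr : 0 < r)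
    (hex : ExactModAt f J r) {x : A} (hx : ∀ t, f t * x ∈ J) : x ∈ J := by
  obtain ⟨q, rfl⟩ : ∃ q, r = q + 1 := ⟨r - 1, by omega⟩
  have hcycle : IsCycleMod f J (fun _ => x : KoszulTerm A (q + 1) (q + 1)) := fun T => by
    rw [koszulD_apply]
    refine Submodule.sum_mem _ fun i _ => ?_
    split_ifs
    · exact J.zero_mem
    · rw [mul_assoc]
      exact J.mul_mem_left _ (hx i)
  obtain ⟨w, hw⟩ := hex _ hcycle
  have hdw : koszulD f (q + 1) w ⟨Finset.univ, by simp⟩ = 0 := by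
    rw [koszulD_apply]
    exact Finset.sum_eq_zero fun i _ => dif_pos (Finset.mem_univ i)
  simpa [hdw] using hw ⟨Finset.univ, by simp⟩

theorem exists_isWeaklyRegularMod_of_exactModAt [IsNoetherianRing A] (f : Fin r → A)
    (hex : ∀ p, ExactModAt f ⊥ (p + 1)) (j : ℕ) (hj : j ≤ r) :
    ∃ g : Fin j → A, (∀ i, g i ∈ Ideal.span (Set.range f)) ∧ IsWeaklyRegularMod ⊥ g ∧
      ∀ p, j < p → ExactModAt f (Ideal.span (Set.range g)) p := by
  induction j with
  | zero =>
    refine ⟨Fin.elim0, fun i => i.elim0, fun i => i.elim0, fun p hp => ?_⟩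
    obtain ⟨q, rfl⟩ : ∃ q, p = q + 1 := ⟨p - 1, by omega⟩
    simpa using hex q
  | succ j ih =>
    obtain ⟨g, hgf, hg, hgex⟩ := ih (by omega)
    obtain ⟨h, hhf, hh⟩ := exists_mem_span_regular_of_forall_mul_mem f _ fun x =>
      mem_of_forall_mul_mem_of_exactModAt f (by omega) (hgex r (by omega))
    have hspan : Ideal.span (Set.range (Fin.snoc g h : Fin (j + 1) → A)) =
        Ideal.span (Set.range g) ⊔ Ideal.span {h} := by
      rw [Fin.range_snoc, Ideal.span_insert, sup_comm]
    refine ⟨Fin.snoc g h, fun i => ?_, hg.snoc (by simpa using hh), fun p hp => ?_⟩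
    · induction i using Fin.lastCases <;> simp [hhf, hgf]
    · obtain ⟨q, rfl⟩ : ∃ q, p = q + 1 := ⟨p - 1, by omega⟩
      rw [hspan]
      exact exactModAt_sup_span_singleton f hh (hgex q (by omega)) (hgex (q + 1) (by omega))

lemma ker_eq_range_iff_exactModAt_bot (f : Fin r → A) (p : ℕ) :
    LinearMap.ker (koszulD f p) = LinearMap.range (koszulD f (p + 1)) ↔
      ExactModAt f ⊥ (p + 1) := by
  rw [le_antisymm_iff, and_iff_left (LinearMap.range_le_ker_iff.2 (koszulD_comp_koszulD f p))]
  simp only [ExactModAt, IsCycleMod, Ideal.mem_bot, sub_eq_zero, SetLike.le_def,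
    LinearMap.mem_ker, LinearMap.mem_range, @eq_comm (KoszulTerm A r (p + 1)), funext_iff,
    Pi.zero_apply]

theorem le_of_depthGE (f : Fin r → A) (hproper : Ideal.span (Set.range f) ≠ ⊤) {k : ℕ}
    (hk : depthGE (Ideal.span (Set.range f)) k) : k ≤ r := by
  obtain ⟨g, hgf, hg⟩ := hk
  by_contra! hrk
  obtain ⟨w, hw⟩ := exactModAt_of_isWeaklyRegularMod f hgf (isWeaklyRegularMod_bot_iff.2 hg.2) 0
    (by omega) (fun _ => 1) trivial
  have h1 := hw ⟨∅, Finset.card_empty⟩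
  rw [Ideal.mem_bot, sub_eq_zero] at h1
  exact hproper ((Ideal.eq_top_iff_one _).2 (h1 ▸ koszulD_apply_mem_span f w _))

end KoszulComplex

/-- **Eagon–Northcott, case `s = 1` (depth sensitivity of the Koszul complex).**
Let `R` be a commutative Noetherian ring and `f₁,…,fᵣ` generators of a proper ideal `I`.
The Koszul complex `K_•(f₁,…,fᵣ)` has vanishing homology in all positive homological
degrees (i.e. is exact at `K_p` for every `p ≥ 1`) if and only if `depth I = r`. -/
theorem koszul_exact_iff_depth_eq {A : Type} [CommRing A] [IsNoetherianRing A] {r : ℕ}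
    (f : Fin r → A) (hproper : Ideal.span (Set.range f) ≠ ⊤) :
    (∀ p : ℕ, LinearMap.ker (koszulD f p) = LinearMap.range (koszulD f (p + 1))) ↔
      depthEq (Ideal.span (Set.range f)) r := by
  simp only [KoszulComplex.ker_eq_range_iff_exactModAt_bot]
  constructor
  · intro hex
    obtain ⟨g, hgf, hg, -⟩ := KoszulComplex.exists_isWeaklyRegularMod_of_exactModAt f hex r le_rfl
    have hproper_g : Ideal.span (Set.range g) ≠ ⊤ := fun htop =>
      hproper (eq_top_iff.2 (htop ▸ Ideal.span_le.2 (Set.range_subset_iff.2 hgf)))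
    exact ⟨⟨g, hgf, hproper_g, isWeaklyRegularMod_bot_iff.1 hg⟩,
      fun k hk => KoszulComplex.le_of_depthGE f hproper hk⟩
  · rintro ⟨⟨g, hgf, -, hg⟩, -⟩ p
    exact KoszulComplex.exactModAt_of_isWeaklyRegularMod f hgf
      (isWeaklyRegularMod_bot_iff.2 hg) (p + 1) (by omega)

end
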